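/- arXiv:2504.13278 — 2 statements merged into one kernel-verified Lean document; each statement's English description precedes it below -/
import Mathlib

section
/- With P symmetric positive semidefinite, R symmetric positive definite, S = H P Hᵀ + R and K = P Hᵀ S⁻¹, the updated covariance (I − K H) P is positive semidefinite. -/
open Matrix

/-! The gain `K = P Hᴴ S⁻¹` is exactly the one for which `K S = P Hᴴ`, and under that relation
the updated covariance `(1 - K H) P` equals its Joseph form `(1 - K H) P (1 - K H)ᴴ + K R Kᴴ`,
a sum of congruence transforms of the positive semidefinite matrices `P` and `R`. -/

namespace Matrix

section Joseph

variable {m n 𝕜 : Type*} [Fintype m] [Fintype n] [DecidableEq n] [Ring 𝕜] [StarRing 𝕜]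

theorem one_sub_mul_mul_eq_joseph_form {P : Matrix n n 𝕜} {H : Matrix m n 𝕜}
    {R : Matrix m m 𝕜} {K : Matrix n m 𝕜} (hK : K * (H * P * Hᴴ + R) = P * Hᴴ) :
    (1 - K * H) * P = (1 - K * H) * P * (1 - K * H)ᴴ + K * R * Kᴴ :=
  calc (1 - K * H) * P
      = (1 - K * H) * P - (P * Hᴴ - K * (H * P * Hᴴ + R)) * Kᴴ := by
        rw [hK, sub_self, Matrix.zero_mul, sub_zero]
    _ = (1 - K * H) * P * (1 - K * H)ᴴ + K * R * Kᴴ := by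
        simp only [conjTranspose_sub, conjTranspose_one, conjTranspose_mul, Matrix.sub_mul,
          Matrix.mul_sub, Matrix.add_mul, Matrix.mul_add, Matrix.one_mul, Matrix.mul_one,
          Matrix.mul_assoc]
        abel

end Joseph

variable {m n 𝕜 : Type*} [Fintype m] [Fintype n] [DecidableEq m] [DecidableEq n]
  [Field 𝕜] [PartialOrder 𝕜] [StarRing 𝕜] [StarOrderedRing 𝕜]

theorem PosSemidef.kalman_update {P : Matrix n n 𝕜} {R : Matrix m m 𝕜}
    (hP : P.PosSemidef) (hR : R.PosDef) (H : Matrix m n 𝕜) :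
    ((1 - P * Hᴴ * (H * P * Hᴴ + R)⁻¹ * H) * P).PosSemidef := by
  set S := H * P * Hᴴ + R
  set K := P * Hᴴ * S⁻¹
  have hS : S.PosDef := PosDef.posSemidef_add (hP.mul_mul_conjTranspose_same H) hR
  have hKS : K * S = P * Hᴴ :=
    nonsing_inv_mul_cancel_right S _ ((isUnit_iff_isUnit_det S).1 hS.isUnit)
  rw [one_sub_mul_mul_eq_joseph_form hKS]
  exact (hP.mul_mul_conjTranspose_same _).add (hR.posSemidef.mul_mul_conjTranspose_same K)

end Matrix

theorem kalman_update_posSemidef_general {n m : ℕ}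
    (P : Matrix (Fin n) (Fin n) ℝ) (H : Matrix (Fin m) (Fin n) ℝ)
    (R S : Matrix (Fin m) (Fin m) ℝ) (K : Matrix (Fin n) (Fin m) ℝ)
    (hP : P.PosSemidef)
    (hR : R.PosDef)
    (hS : S = H * P * Hᵀ + R) (hK : K = P * Hᵀ * S⁻¹) :
    ((1 - K * H) * P).PosSemidef := by
  subst hK hS
  simpa only [conjTranspose_eq_transpose_of_trivial] using hP.kalman_update hR H

/-- Kalman update: with `S = H * P * Hᵀ + R` and gain `K = P * Hᵀ * S⁻¹`, the updated
covariance `(I − K * H) * P` is positive semidefinite. -/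
theorem kalman_update_posSemidef {n m : ℕ}
    (P : Matrix (Fin n) (Fin n) ℝ) (H : Matrix (Fin m) (Fin n) ℝ)
    (R S : Matrix (Fin m) (Fin m) ℝ) (K : Matrix (Fin n) (Fin m) ℝ)
    (hPsymm : P.IsSymm) (hP : P.PosSemidef)
    (hRsymm : R.IsSymm) (hR : R.PosDef)
    (hS : S = H * P * Hᵀ + R) (hK : K = P * Hᵀ * S⁻¹) :
    ((1 - K * H) * P).PosSemidef :=
  kalman_update_posSemidef_general P H R S K hP hR hS hK
end

section
/- The optimal Kalman gain minimizes the trace of the posterior covariance: for any gain K', trace((I − K H) P (I − K H)ᵀ + K R Kᵀ) evaluated at K = P Hᵀ (H P Hᵀ + R)⁻¹ is less than or equal to its value at K = K'. -/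
/-!
Expanding the Joseph form shows that `J` is a quadratic function of the gain whose quadratic part
is `K S Kᵀ`, with `S = H P Hᵀ + R` positive definite. The optimal gain solves the normal equation
`K* S = P Hᵀ`, so completing the square gives `J(K) = J(K*) + (K - K*) S (K - K*)ᵀ`; the last term
is positive semidefinite and therefore has nonnegative trace.
-/

open Matrix

section CommRing

variable {ι κ α : Type*} [Fintype ι] [Fintype κ] [CommRing α]

noncomputable def kalmanGain [DecidableEq κ] (P : Matrix ι ι α) (H : Matrix κ ι α)
    (R : Matrix κ κ α) : Matrix ι κ α :=
  P * Hᵀ * (H * P * Hᵀ + R)⁻¹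

theorem kalmanGain_mul [DecidableEq κ] {P : Matrix ι ι α} {H : Matrix κ ι α} {R : Matrix κ κ α}
    (hS : IsUnit (H * P * Hᵀ + R).det) : kalmanGain P H R * (H * P * Hᵀ + R) = P * Hᵀ := by
  rw [kalmanGain, Matrix.mul_assoc, nonsing_inv_mul _ hS, Matrix.mul_one]

variable [DecidableEq ι]

def josephForm (P : Matrix ι ι α) (H : Matrix κ ι α) (R : Matrix κ κ α) (K : Matrix ι κ α) :
    Matrix ι ι α :=
  (1 - K * H) * P * (1 - K * H)ᵀ + K * R * Kᵀ

theorem josephForm_eq (P : Matrix ι ι α) (H : Matrix κ ι α) (R : Matrix κ κ α)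
    (K : Matrix ι κ α) :
    josephForm P H R K = P - K * (H * P) - P * Hᵀ * Kᵀ + K * (H * P * Hᵀ + R) * Kᵀ := by
  simp only [josephForm, transpose_sub, transpose_mul, transpose_one, Matrix.sub_mul,
    Matrix.mul_sub, Matrix.add_mul, Matrix.mul_add, Matrix.mul_one, Matrix.one_mul,
    Matrix.mul_assoc]
  abel

theorem josephForm_eq_add_mul_mul_transpose_sub {P : Matrix ι ι α} {H : Matrix κ ι α}
    {R : Matrix κ κ α} {K₀ : Matrix ι κ α} (hP : Pᵀ = P) (hR : Rᵀ = R)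
    (hK₀ : K₀ * (H * P * Hᵀ + R) = P * Hᵀ) (K : Matrix ι κ α) :
    josephForm P H R K =
      josephForm P H R K₀ + (K - K₀) * (H * P * Hᵀ + R) * (K - K₀)ᵀ := by
  have hK₀t : (H * P * Hᵀ + R) * K₀ᵀ = H * P := by
    simpa [transpose_mul, hP, hR, Matrix.mul_assoc] using congrArg transpose hK₀
  rw [josephForm_eq, josephForm_eq]
  generalize H * P * Hᵀ + R = S at hK₀ hK₀t ⊢
  rw [← hK₀, ← hK₀t]
  simp only [transpose_sub, Matrix.sub_mul, Matrix.mul_sub, Matrix.mul_assoc]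
  abel

end CommRing

variable {ι κ : Type*} [Fintype ι] [Fintype κ] [DecidableEq ι] [DecidableEq κ]

theorem posSemidef_josephForm_sub_kalmanGain {P : Matrix ι ι ℝ} {H : Matrix κ ι ℝ}
    {R : Matrix κ κ ℝ} (hP : P.PosSemidef) (hR : R.PosDef) (K : Matrix ι κ ℝ) :
    (josephForm P H R K - josephForm P H R (kalmanGain P H R)).PosSemidef := by
  have hS : (H * P * Hᵀ + R).PosDef := by
    rw [add_comm]
    exact hR.add_posSemidef (by simpa using hP.mul_mul_conjTranspose_same H)
  have hgain := kalmanGain_mul ((isUnit_iff_isUnit_det _).mp hS.isUnit)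
  rw [josephForm_eq_add_mul_mul_transpose_sub (isHermitian_iff_isSymm.mp hP.isHermitian).eq
    (isHermitian_iff_isSymm.mp hR.isHermitian).eq hgain K, add_sub_cancel_left]
  simpa [Matrix.mul_assoc] using hS.posSemidef.mul_mul_conjTranspose_same (K - kalmanGain P H R)

theorem kalman_gain_minimizes_trace_general {n m : ℕ}
    (P : Matrix (Fin n) (Fin n) ℝ) (H : Matrix (Fin m) (Fin n) ℝ)
    (R : Matrix (Fin m) (Fin m) ℝ)
    (hP : P.PosSemidef)
    (hR : R.PosDef)
    (Kstar : Matrix (Fin n) (Fin m) ℝ)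
    (hKstar : Kstar = P * Hᵀ * (H * P * Hᵀ + R)⁻¹)
    (K' : Matrix (Fin n) (Fin m) ℝ) :
    ((1 - Kstar * H) * P * (1 - Kstar * H)ᵀ + Kstar * R * Kstarᵀ).trace ≤
      ((1 - K' * H) * P * (1 - K' * H)ᵀ + K' * R * K'ᵀ).trace := by
  subst hKstar
  have hgap := (posSemidef_josephForm_sub_kalmanGain (H := H) hP hR K').trace_nonneg
  rw [trace_sub, sub_nonneg] at hgap
  exact hgap

/-- Optimality of the Kalman gain: the optimal gain `K* = P Hᵀ (H P Hᵀ + R)⁻¹` minimizes the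
trace of the Joseph form posterior covariance `J(K) = (I − K H) P (I − K H)ᵀ + K R Kᵀ`. -/
theorem kalman_gain_minimizes_trace {n m : ℕ}
    (P : Matrix (Fin n) (Fin n) ℝ) (H : Matrix (Fin m) (Fin n) ℝ)
    (R : Matrix (Fin m) (Fin m) ℝ)
    (hPsymm : P.IsSymm) (hP : P.PosSemidef)
    (hRsymm : R.IsSymm) (hR : R.PosDef)
    (Kstar : Matrix (Fin n) (Fin m) ℝ)
    (hKstar : Kstar = P * Hᵀ * (H * P * Hᵀ + R)⁻¹)
    (K' : Matrix (Fin n) (Fin m) ℝ) :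
    ((1 - Kstar * H) * P * (1 - Kstar * H)ᵀ + Kstar * R * Kstarᵀ).trace ≤
      ((1 - K' * H) * P * (1 - K' * H)ᵀ + K' * R * K'ᵀ).trace :=
  kalman_gain_minimizes_trace_general P H R hP hR Kstar hKstar K'
end
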